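/- arXiv:math/0105192 — 2 statements merged into one kernel-verified Lean document; each statement's English description precedes it below -/
import Mathlib

section
/- Let f : [1,∞) → (0,∞) be bounded and bounded away from 0 on every bounded interval, satisfy c·t^(−A) ≤ f(t) ≤ C·t^(−ε) for some constants ε, A, c, C ∈ (0,∞) and all t ≥ 1, and suppose there exist constants 0 ≤ c₋ ≤ c₊ ≤ ∞, at least one of which is finite and positive, such that c₋·f(t)·f(t') ≤ f(t·t') ≤ c₊·f(t)·f(t') for all t, t' ≥ 1. Then there exists ξ > 0 such that for all t ≥ 1, c₊⁻¹·t^(−ξ) ≤ f(t) ≤ c₋⁻¹·t^(−ξ) (interpreting an inequality involving c₋ = 0 or c₊ = ∞ as vacuous). -/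
open Real Filter

lemma iter_super (G : ℝ → ℝ)
    (hsuper : ∀ s ≥ (0:ℝ), ∀ s' ≥ (0:ℝ), G s + G s' ≤ G (s + s'))
    {s : ℝ} (hs : 0 ≤ s) : ∀ n : ℕ, (n + 1 : ℝ) * G s ≤ G ((n + 1) * s) := by
  intro n
  induction n with
  | zero => simp
  | succ k ih =>
    have h1 : ((k:ℝ) + 1 + 1) * s = ((k:ℝ)+1) * s + s := by ring
    have h2 := hsuper (((k:ℝ)+1)*s) (by positivity) s hs
    push_cast
    rw [h1]
    nlinarith [h2, ih]

lemma super_linear_bound (G : ℝ → ℝ) (K a : ℝ)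
    (hsuper : ∀ s ≥ (0:ℝ), ∀ s' ≥ (0:ℝ), G s + G s' ≤ G (s + s'))
    (hupp : ∀ s ≥ (0:ℝ), G s ≤ K + a * s) :
    ∀ s ≥ (0:ℝ), G s ≤ a * s := by
  intro s hs
  have key : ∀ n : ℕ, G s ≤ K / (n+1) + a * s := by
    intro n
    have h1 := iter_super G hsuper hs n
    have h2 := hupp ((n+1)*s) (by positivity)
    have hn : (0:ℝ) < (n:ℝ) + 1 := by positivity
    rw [div_add' _ _ _ (ne_of_gt hn), le_div_iff₀ hn]
    nlinarith
  have ht : Tendsto (fun n : ℕ => K / ((n:ℝ)+1) + a * s) atTop (nhds (0 + a * s)) := by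
    have h0 : Tendsto (fun n : ℕ => K / ((n:ℝ)+1)) atTop (nhds 0) :=
      (tendsto_const_div_atTop_nhds_zero_nat K).comp (tendsto_add_atTop_nat 1) |>.congr
        (by intro n; simp)
    exact h0.add tendsto_const_nhds
  rw [zero_add] at ht
  exact ge_of_tendsto ht (Eventually.of_forall key)

lemma decay_upper (f : ℝ → ℝ) (a C M : ℝ)
    (hpos : ∀ t ≥ (1:ℝ), 0 < f t) (hC : 0 < C) (hM : 0 < M)
    (hupp : ∀ t ≥ (1:ℝ), f t ≤ C * t ^ a)
    (hsuper : ∀ t ≥ (1:ℝ), ∀ t' ≥ (1:ℝ), M * (f t * f t') ≤ f (t * t')) :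
    ∀ t ≥ (1:ℝ), f t ≤ M⁻¹ * t ^ a := by
  set G : ℝ → ℝ := fun s => Real.log (f (Real.exp s)) + Real.log M with hG
  have hexp1 : ∀ s : ℝ, 0 ≤ s → 1 ≤ Real.exp s := fun s hs => Real.one_le_exp hs
  have hGsuper : ∀ s ≥ (0:ℝ), ∀ s' ≥ (0:ℝ), G s + G s' ≤ G (s + s') := by
    intro s hs s' hs'
    have h1 := hsuper _ (hexp1 s hs) _ (hexp1 s' hs')
    have hf1 := hpos _ (hexp1 s hs)
    have hf2 := hpos _ (hexp1 s' hs')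
    have hf3 := hpos _ (hexp1 (s+s') (by linarith))
    rw [← Real.exp_add] at h1
    have h2 : Real.log (M * (f (Real.exp s) * f (Real.exp s'))) ≤ Real.log (f (Real.exp (s+s'))) :=
      Real.log_le_log (by positivity) h1
    rw [Real.log_mul (ne_of_gt hM) (by positivity),
        Real.log_mul (ne_of_gt hf1) (ne_of_gt hf2)] at h2
    simp only [hG]; linarith
  have hGupp : ∀ s ≥ (0:ℝ), G s ≤ (Real.log C + Real.log M) + a * s := by
    intro s hs
    have h1 := hupp _ (hexp1 s hs)
    have hf1 := hpos _ (hexp1 s hs)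
    have h2 : Real.log (f (Real.exp s)) ≤ Real.log (C * Real.exp s ^ a) :=
      Real.log_le_log hf1 h1
    rw [Real.log_mul (ne_of_gt hC) (by positivity), Real.log_rpow (Real.exp_pos s),
        Real.log_exp] at h2
    simp only [hG]; linarith
  have hGle := super_linear_bound G _ a hGsuper hGupp
  intro t ht
  have ht0 : (0:ℝ) < t := lt_of_lt_of_le one_pos ht
  have hlt : 0 ≤ Real.log t := Real.log_nonneg ht
  have h1 := hGle (Real.log t) hlt
  rw [hG] at h1; simp only [Real.exp_log ht0] at h1
  have hft := hpos t ht
  have h2 : f t ≤ Real.exp (a * Real.log t - Real.log M) := by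
    calc f t = Real.exp (Real.log (f t)) := (Real.exp_log hft).symm
    _ ≤ _ := Real.exp_le_exp.mpr (by linarith)
  calc f t ≤ Real.exp (a * Real.log t - Real.log M) := h2
  _ = M⁻¹ * t ^ a := by
      rw [Real.exp_sub, Real.exp_log hM, Real.rpow_def_of_pos ht0,
        mul_comm (Real.log t) a, div_eq_mul_inv, mul_comm]


lemma decay_lower (f : ℝ → ℝ) (a c P : ℝ)
    (hpos : ∀ t ≥ (1:ℝ), 0 < f t) (hc : 0 < c) (hP : 0 < P)
    (hlow : ∀ t ≥ (1:ℝ), c * t ^ a ≤ f t)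
    (hsub : ∀ t ≥ (1:ℝ), ∀ t' ≥ (1:ℝ), f (t * t') ≤ P * (f t * f t')) :
    ∀ t ≥ (1:ℝ), P⁻¹ * t ^ a ≤ f t := by
  set G : ℝ → ℝ := fun s => -(Real.log (f (Real.exp s)) + Real.log P) with hG
  have hexp1 : ∀ s : ℝ, 0 ≤ s → 1 ≤ Real.exp s := fun s hs => Real.one_le_exp hs
  have hGsuper : ∀ s ≥ (0:ℝ), ∀ s' ≥ (0:ℝ), G s + G s' ≤ G (s + s') := by
    intro s hs s' hs'
    have h1 := hsub _ (hexp1 s hs) _ (hexp1 s' hs')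
    have hf1 := hpos _ (hexp1 s hs)
    have hf2 := hpos _ (hexp1 s' hs')
    have hf3 := hpos _ (hexp1 (s+s') (by linarith))
    rw [← Real.exp_add] at h1
    have h2 : Real.log (f (Real.exp (s+s'))) ≤ Real.log (P * (f (Real.exp s) * f (Real.exp s'))) :=
      Real.log_le_log hf3 h1
    rw [Real.log_mul (ne_of_gt hP) (by positivity),
        Real.log_mul (ne_of_gt hf1) (ne_of_gt hf2)] at h2
    simp only [hG]; linarith
  have hGupp : ∀ s ≥ (0:ℝ), G s ≤ (-(Real.log c + Real.log P)) + (-a) * s := by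
    intro s hs
    have h1 := hlow _ (hexp1 s hs)
    have hf1 := hpos _ (hexp1 s hs)
    have h2 : Real.log (c * Real.exp s ^ a) ≤ Real.log (f (Real.exp s)) :=
      Real.log_le_log (by positivity) h1
    rw [Real.log_mul (ne_of_gt hc) (by positivity), Real.log_rpow (Real.exp_pos s),
        Real.log_exp] at h2
    simp only [hG]; linarith
  have hGle := super_linear_bound G _ (-a) hGsuper hGupp
  intro t ht
  have ht0 : (0:ℝ) < t := lt_of_lt_of_le one_pos ht
  have hlt : 0 ≤ Real.log t := Real.log_nonneg ht
  have h1 := hGle (Real.log t) hlt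
  rw [hG] at h1; simp only [Real.exp_log ht0] at h1
  have hft := hpos t ht
  calc P⁻¹ * t ^ a = Real.exp (a * Real.log t - Real.log P) := by
        rw [Real.exp_sub, Real.exp_log hP, Real.rpow_def_of_pos ht0,
          mul_comm (Real.log t) a, div_eq_mul_inv, mul_comm]
  _ ≤ Real.exp (Real.log (f t)) := Real.exp_le_exp.mpr (by linarith)
  _ = f t := Real.exp_log hft

lemma one_lt_exp' {s : ℝ} (h : 0 < s) : 1 < Real.exp s := by
  rw [← Real.exp_zero]; exact Real.exp_lt_exp.mpr h

lemma rpow_of_log_le {f : ℝ → ℝ} {b x t : ℝ} (ht : 1 ≤ t) (hft : 0 < f t) (hb : 0 < b)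
    (h : Real.log (f t) + Real.log b ≤ x * Real.log t) : f t ≤ b⁻¹ * t ^ x := by
  have ht0 : (0:ℝ) < t := lt_of_lt_of_le one_pos ht
  calc f t = Real.exp (Real.log (f t)) := (Real.exp_log hft).symm
  _ ≤ Real.exp (x * Real.log t - Real.log b) := Real.exp_le_exp.mpr (by linarith)
  _ = b⁻¹ * t ^ x := by
      rw [Real.exp_sub, Real.exp_log hb, Real.rpow_def_of_pos ht0,
        mul_comm (Real.log t) x, div_eq_mul_inv, mul_comm]

lemma rpow_of_le_log {f : ℝ → ℝ} {b x t : ℝ} (ht : 1 ≤ t) (hft : 0 < f t) (hb : 0 < b)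
    (h : x * Real.log t ≤ Real.log (f t) + Real.log b) : b⁻¹ * t ^ x ≤ f t := by
  have ht0 : (0:ℝ) < t := lt_of_lt_of_le one_pos ht
  calc b⁻¹ * t ^ x = Real.exp (x * Real.log t - Real.log b) := by
        rw [Real.exp_sub, Real.exp_log hb, Real.rpow_def_of_pos ht0,
          mul_comm (Real.log t) x, div_eq_mul_inv, mul_comm]
  _ ≤ Real.exp (Real.log (f t)) := Real.exp_le_exp.mpr (by linarith)
  _ = f t := Real.exp_log hft

lemma floor_decomp (F : ℝ → ℝ)
    (hsub : ∀ s ≥ (0:ℝ), ∀ s' ≥ (0:ℝ), F (s + s') ≤ F s + F s')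
    (s₁ B : ℝ) (hs₁ : 0 < s₁) (hB : ∀ r, 0 ≤ r → r ≤ s₁ → F r ≤ B) :
    ∀ q : ℕ, ∀ u : ℝ, 0 ≤ u → ⌊u / s₁⌋₊ = q → F u ≤ q * F s₁ + B := by
  intro q
  induction q with
  | zero =>
    intro u hu hq
    have h1 : u / s₁ < 1 := by
      rwa [Nat.floor_eq_zero] at hq
    have h2 : u ≤ s₁ := by
      rw [div_lt_one hs₁] at h1; linarith
    simpa using hB u hu h2
  | succ k ih =>
    intro u hu hq
    have h1 : ((k:ℝ) + 1) ≤ u / s₁ := by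
      have : ((k + 1 : ℕ) : ℝ) ≤ u / s₁ := by
        rw [← hq]; exact Nat.floor_le (div_nonneg hu hs₁.le)
      push_cast at this; linarith
    have hus : s₁ ≤ u := by
      rw [le_div_iff₀ hs₁] at h1; nlinarith [hs₁, Nat.cast_nonneg (α := ℝ) k]
    have hq' : ⌊(u - s₁) / s₁⌋₊ = k := by
      rw [sub_div, div_self hs₁.ne', Nat.floor_sub_one, hq]; omega
    have h3 := hsub (u - s₁) (by linarith) s₁ hs₁.le
    rw [sub_add_cancel] at h3
    have h4 := ih (u - s₁) (by linarith) hq'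
    push_cast
    linarith


lemma fekete_claim (F G : ℝ → ℝ) (D L s₀ : ℝ)
    (hFsub : ∀ s ≥ (0:ℝ), ∀ s' ≥ (0:ℝ), F (s + s') ≤ F s + F s')
    (hGsuper : ∀ s ≥ (0:ℝ), ∀ s' ≥ (0:ℝ), G s + G s' ≤ G (s + s'))
    (hFG : ∀ u, F u = G u + D) (hD : 0 ≤ D) (hs₀ : 0 < s₀)
    (hnear : ∀ η > (0:ℝ), ∃ s₁ > (0:ℝ), F s₁ < (L + η) * s₁)
    (hBnd : ∀ b > (0:ℝ), ∃ B, ∀ r, 0 ≤ r → r ≤ b → F r ≤ B) :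
    G s₀ ≤ L * s₀ := by
  by_contra hcon
  push_neg at hcon
  obtain ⟨δ, hδ, hGs₀⟩ : ∃ δ > (0:ℝ), G s₀ = (L + δ) * s₀ := by
    refine ⟨G s₀ / s₀ - L, by rw [gt_iff_lt, sub_pos, lt_div_iff₀ hs₀]; linarith, ?_⟩
    field_simp
    ring
  obtain ⟨s₁, hs₁, hFs₁⟩ := hnear (δ/2) (by linarith)
  obtain ⟨B, hB⟩ := hBnd s₁ hs₁
  have hdec : ∀ u : ℝ, 0 ≤ u → F u ≤ (⌊u / s₁⌋₊ : ℝ) * F s₁ + B :=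
    fun u hu => floor_decomp F hFsub s₁ B hs₁ hB _ u hu rfl
  obtain ⟨E, hEdef⟩ : ∃ E : ℝ, E = L + δ/2 := ⟨_, rfl⟩
  have key : ∀ n : ℕ, ((n:ℝ)+1) * s₀ * (δ/2) ≤ s₁ * |E| + B - D := by
    intro n
    have hu : (0:ℝ) ≤ ((n:ℝ)+1) * s₀ := by positivity
    have h1 := iter_super G hGsuper hs₀.le n
    have h2 := hdec (((n:ℝ)+1) * s₀) hu
    have hqn : (0:ℝ) ≤ (⌊((n:ℝ)+1) * s₀ / s₁⌋₊ : ℝ) := Nat.cast_nonneg _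
    have hq1 : (⌊((n:ℝ)+1) * s₀ / s₁⌋₊ : ℝ) * s₁ ≤ ((n:ℝ)+1) * s₀ := by
      rw [← le_div_iff₀ hs₁]
      exact Nat.floor_le (div_nonneg hu hs₁.le)
    have hq2 : ((n:ℝ)+1) * s₀ < ((⌊((n:ℝ)+1) * s₀ / s₁⌋₊ : ℝ) + 1) * s₁ := by
      rw [← div_lt_iff₀ hs₁]
      exact_mod_cast Nat.lt_floor_add_one (((n:ℝ)+1) * s₀ / s₁)
    have hq3 : (⌊((n:ℝ)+1) * s₀ / s₁⌋₊ : ℝ) * F s₁ ≤ (⌊((n:ℝ)+1) * s₀ / s₁⌋₊ : ℝ) * (s₁ * E) :=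
      mul_le_mul_of_nonneg_left (by rw [hEdef]; nlinarith [hFs₁]) hqn
    have hq4 : (⌊((n:ℝ)+1) * s₀ / s₁⌋₊ : ℝ) * (s₁ * E) ≤ ((n:ℝ)+1) * s₀ * E + s₁ * |E| := by
      rcases le_or_gt 0 E with hE | hE
      · have h := mul_le_mul_of_nonneg_right hq1 hE
        rw [abs_of_nonneg hE]
        nlinarith
      · rw [abs_of_neg hE]
        nlinarith
    have h5 : ((n:ℝ)+1) * G s₀ + D ≤ F (((n:ℝ)+1) * s₀) := by
      rw [hFG]; linarith
    rw [hGs₀] at h5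
    subst hEdef
    nlinarith [h5, h2, hq3, hq4, hD]
  obtain ⟨n, hn⟩ := exists_nat_gt ((s₁ * |E| + B - D) / (s₀ * (δ/2)))
  have h7 := key n
  have h8 : (s₁ * |E| + B - D) / (s₀ * (δ/2)) < (n:ℝ) + 1 := by linarith
  rw [div_lt_iff₀ (by positivity)] at h8
  nlinarith
section CORE
variable (f : ℝ → ℝ) (ε A c C M P : ℝ)

lemma core_lemma
    (hpos : ∀ t ≥ (1:ℝ), 0 < f t)
    (hbdd : ∀ l > (1:ℝ), ∃ m Mb : ℝ, 0 < m ∧ ∀ t ∈ Set.Icc (1:ℝ) l, m ≤ f t ∧ f t ≤ Mb)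
    (hε : 0 < ε) (hA : 0 < A) (hc : 0 < c) (hC : 0 < C)
    (hlow : ∀ t ≥ (1:ℝ), c * t ^ (-A) ≤ f t)
    (hupp : ∀ t ≥ (1:ℝ), f t ≤ C * t ^ (-ε))
    (hM : 0 < M) (hMP : M ≤ P)
    (hsuper : ∀ t ≥ (1:ℝ), ∀ t' ≥ (1:ℝ), M * (f t * f t') ≤ f (t * t'))
    (hsub : ∀ t ≥ (1:ℝ), ∀ t' ≥ (1:ℝ), f (t * t') ≤ P * (f t * f t')) :
    ∃ ξ : ℝ, 0 < ξ ∧ ∀ t ≥ (1:ℝ), P⁻¹ * t ^ (-ξ) ≤ f t ∧ f t ≤ M⁻¹ * t ^ (-ξ) := by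
  have hP : 0 < P := lt_of_lt_of_le hM hMP
  set F : ℝ → ℝ := fun s => Real.log (f (Real.exp s)) + Real.log P with hFdef
  set G : ℝ → ℝ := fun s => Real.log (f (Real.exp s)) + Real.log M with hGdef
  have hexp1 : ∀ s : ℝ, 0 ≤ s → 1 ≤ Real.exp s := fun s hs => Real.one_le_exp hs
  -- subadditivity of F
  have hFsub : ∀ s ≥ (0:ℝ), ∀ s' ≥ (0:ℝ), F (s + s') ≤ F s + F s' := by
    intro s hs s' hs'
    have h1 := hsub _ (hexp1 s hs) _ (hexp1 s' hs')
    have hf1 := hpos _ (hexp1 s hs)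
    have hf2 := hpos _ (hexp1 s' hs')
    have hf3 := hpos _ (hexp1 (s+s') (by linarith))
    rw [← Real.exp_add] at h1
    have h2 : Real.log (f (Real.exp (s+s'))) ≤ Real.log (P * (f (Real.exp s) * f (Real.exp s'))) :=
      Real.log_le_log hf3 h1
    rw [Real.log_mul (ne_of_gt hP) (by positivity),
        Real.log_mul (ne_of_gt hf1) (ne_of_gt hf2)] at h2
    simp only [hFdef]; linarith
  -- superadditivity of G
  have hGsuper : ∀ s ≥ (0:ℝ), ∀ s' ≥ (0:ℝ), G s + G s' ≤ G (s + s') := by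
    intro s hs s' hs'
    have h1 := hsuper _ (hexp1 s hs) _ (hexp1 s' hs')
    have hf1 := hpos _ (hexp1 s hs)
    have hf2 := hpos _ (hexp1 s' hs')
    have hf3 := hpos _ (hexp1 (s+s') (by linarith))
    rw [← Real.exp_add] at h1
    have h2 : Real.log (M * (f (Real.exp s) * f (Real.exp s'))) ≤ Real.log (f (Real.exp (s+s'))) :=
      Real.log_le_log (by positivity) h1
    rw [Real.log_mul (ne_of_gt hM) (by positivity),
        Real.log_mul (ne_of_gt hf1) (ne_of_gt hf2)] at h2
    simp only [hGdef]; linarith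
  -- polynomial bounds on F
  have hFup : ∀ s ≥ (0:ℝ), F s ≤ (Real.log C + Real.log P) + (-ε) * s := by
    intro s hs
    have h1 := hupp _ (hexp1 s hs)
    have hf1 := hpos _ (hexp1 s hs)
    have h2 : Real.log (f (Real.exp s)) ≤ Real.log (C * Real.exp s ^ (-ε)) :=
      Real.log_le_log hf1 h1
    rw [Real.log_mul (ne_of_gt hC) (by positivity), Real.log_rpow (Real.exp_pos s),
        Real.log_exp] at h2
    simp only [hFdef]; linarith
  have hFlo : ∀ s ≥ (0:ℝ), (Real.log c + Real.log P) + (-A) * s ≤ F s := by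
    intro s hs
    have h1 := hlow _ (hexp1 s hs)
    have hf1 := hpos _ (hexp1 s hs)
    have h2 : Real.log (c * Real.exp s ^ (-A)) ≤ Real.log (f (Real.exp s)) :=
      Real.log_le_log (by positivity) h1
    rw [Real.log_mul (ne_of_gt hc) (by positivity), Real.log_rpow (Real.exp_pos s),
        Real.log_exp] at h2
    simp only [hFdef]; linarith
  -- F s ≥ -A s
  have hFge : ∀ s ≥ (0:ℝ), (-A) * s ≤ F s := by
    have := super_linear_bound (fun s => -(F s)) (-(Real.log c + Real.log P)) A
      (fun s hs s' hs' => by have := hFsub s hs s' hs'; linarith)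
      (fun s hs => by have := hFlo s hs; linarith)
    intro s hs; have := this s hs; linarith
  have hF0 : 0 ≤ F 0 := by
    have h1 := hsub 1 le_rfl 1 le_rfl
    have hf1 := hpos 1 le_rfl
    rw [mul_one] at h1
    have h2 : 1 ≤ f 1 * P := by
      rw [mul_comm]; nlinarith
    have h3 : 0 ≤ Real.log (f 1 * P) := Real.log_nonneg h2
    rw [Real.log_mul (ne_of_gt hf1) (ne_of_gt hP)] at h3
    simp only [hFdef, Real.exp_zero]; linarith
  have hG0 : G 0 ≤ 0 := by
    have h1 := hsuper 1 le_rfl 1 le_rfl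
    have hf1 := hpos 1 le_rfl
    rw [mul_one] at h1
    have h2 : f 1 * M ≤ 1 := by nlinarith
    have h3 : Real.log (f 1 * M) ≤ 0 := Real.log_nonpos (by positivity) h2
    rw [Real.log_mul (ne_of_gt hf1) (ne_of_gt hM)] at h3
    simp only [hGdef, Real.exp_zero]; linarith
  -- the exponent
  set S : Set ℝ := (fun s => F s / s) '' Set.Ioi (0:ℝ) with hSdef
  have hSne : S.Nonempty := ⟨F 1 / 1, ⟨1, Set.mem_Ioi.mpr one_pos, rfl⟩⟩
  have hSbdd : BddBelow S := by
    refine ⟨-A, ?_⟩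
    rintro x ⟨s, hs, rfl⟩
    rw [Set.mem_Ioi] at hs
    have := hFge s hs.le
    rw [le_div_iff₀ hs]
    linarith [this]
  set L : ℝ := sInf S with hLdef
  have hLle : ∀ s, 0 < s → L ≤ F s / s := fun s hs => csInf_le hSbdd ⟨s, Set.mem_Ioi.mpr hs, rfl⟩
  have hLF : ∀ s ≥ (0:ℝ), L * s ≤ F s := by
    intro s hs
    rcases eq_or_lt_of_le hs with h | h
    · rw [← h]; simpa using hF0
    · have := hLle s h
      rw [le_div_iff₀ h] at this; linarith
  have hLeps : L ≤ -ε := by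
    have key : ∀ n : ℕ, L ≤ (Real.log C + Real.log P) / (n+1) + (-ε) := by
      intro n
      have hn : (0:ℝ) < (n:ℝ) + 1 := by positivity
      have h1 := hLle ((n:ℝ)+1) hn
      have h2 := hFup ((n:ℝ)+1) hn.le
      have h3 : F ((n:ℝ)+1) / ((n:ℝ)+1) ≤ (Real.log C + Real.log P) / ((n:ℝ)+1) + (-ε) := by
        rw [div_le_iff₀ hn]
        have e : ((Real.log C + Real.log P) / ((n:ℝ)+1) + (-ε)) * ((n:ℝ)+1)
            = (Real.log C + Real.log P) + (-ε) * ((n:ℝ)+1) := by field_simp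
        rw [e]; linarith
      linarith
    have ht : Filter.Tendsto (fun n : ℕ => (Real.log C + Real.log P) / ((n:ℝ)+1) + (-ε))
        Filter.atTop (nhds (0 + (-ε))) := by
      have h0 : Filter.Tendsto (fun n : ℕ => (Real.log C + Real.log P) / ((n:ℝ)+1))
          Filter.atTop (nhds 0) :=
        (tendsto_const_div_atTop_nhds_zero_nat (Real.log C + Real.log P)).comp (tendsto_add_atTop_nat 1) |>.congr
          (by intro n; simp)
      exact h0.add tendsto_const_nhds
    rw [zero_add] at ht
    exact ge_of_tendsto ht (Filter.Eventually.of_forall key)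
  -- Fekete: G s ≤ L * s
  have hGL : ∀ s ≥ (0:ℝ), G s ≤ L * s := by
    intro s₀ hs₀'
    rcases eq_or_lt_of_le hs₀' with h | hs₀
    · rw [← h]; simpa using hG0
    · refine fekete_claim F G (Real.log P - Real.log M) L s₀ hFsub hGsuper
        (fun u => by simp only [hFdef, hGdef]; ring)
        (by linarith [Real.log_le_log hM hMP]) hs₀ ?_ ?_
      · intro η hη
        obtain ⟨x, hxS, hx⟩ := exists_lt_of_csInf_lt hSne (show L < L + η by linarith)
        obtain ⟨s₁, hs₁', rfl⟩ := hxS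
        rw [Set.mem_Ioi] at hs₁'
        exact ⟨s₁, hs₁', by rw [div_lt_iff₀ hs₁'] at hx; linarith⟩
      · intro b hb
        obtain ⟨m, Mb, hm, hmb⟩ := hbdd (Real.exp b) (one_lt_exp' hb)
        refine ⟨Real.log Mb + Real.log P, fun r hr hrb => ?_⟩
        have her : Real.exp r ∈ Set.Icc (1:ℝ) (Real.exp b) :=
          ⟨hexp1 r hr, Real.exp_le_exp.mpr hrb⟩
        have h1 := (hmb _ her).2
        have hf1 := hpos _ (hexp1 r hr)
        have h2 := Real.log_le_log hf1 h1
        simp only [hFdef]; linarith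
  -- conclusion
  refine ⟨-L, by linarith, ?_⟩
  intro t ht
  have ht0 : (0:ℝ) < t := lt_of_lt_of_le one_pos ht
  have hft := hpos t ht
  have hlt : 0 ≤ Real.log t := Real.log_nonneg ht
  have h1 := hLF (Real.log t) hlt
  have h2 := hGL (Real.log t) hlt
  simp only [hFdef, hGdef, Real.exp_log ht0] at h1 h2
  constructor
  · have := rpow_of_le_log ht hft hP (by linarith : L * Real.log t ≤ Real.log (f t) + Real.log P)
    rwa [neg_neg]
  · have := rpow_of_log_le ht hft hM (by linarith : Real.log (f t) + Real.log M ≤ L * Real.log t)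
    rwa [neg_neg]

end CORE

lemma ofReal_inv_mul_le {b x y : ℝ} (hb : 0 < b) (h : b⁻¹ * x ≤ y) :
    (ENNReal.ofReal b)⁻¹ * ENNReal.ofReal x ≤ ENNReal.ofReal y := by
  rw [← ENNReal.ofReal_inv_of_pos hb, ← ENNReal.ofReal_mul (inv_nonneg.mpr hb.le)]
  exact ENNReal.ofReal_le_ofReal h

lemma le_ofReal_inv_mul {b x y : ℝ} (hb : 0 < b) (h : y ≤ b⁻¹ * x) :
    ENNReal.ofReal y ≤ (ENNReal.ofReal b)⁻¹ * ENNReal.ofReal x := by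
  rw [← ENNReal.ofReal_inv_of_pos hb, ← ENNReal.ofReal_mul (inv_nonneg.mpr hb.le)]
  exact ENNReal.ofReal_le_ofReal h

open scoped ENNReal

/-- subadditivity lemma with explicit constants. Constants `cm = c₋`
and `cp = c₊` live in `ℝ≥0∞` so that `c₋ = 0` or `c₊ = ∞` are allowed; an
inequality against `c₊⁻¹ = 0` or `c₋⁻¹ = ∞` is then vacuous. -/
theorem subadditivity_lemma (f : ℝ → ℝ) (cm cp : ℝ≥0∞)
    (hpos : ∀ t ≥ (1 : ℝ), 0 < f t)
    (hbdd : ∀ l > (1 : ℝ), ∃ m M : ℝ, 0 < m ∧ ∀ t ∈ Set.Icc (1 : ℝ) l, m ≤ f t ∧ f t ≤ M)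
    (hpoly : ∃ ε A c C : ℝ, 0 < ε ∧ 0 < A ∧ 0 < c ∧ 0 < C ∧
      ∀ t ≥ (1 : ℝ), c * t ^ (-A) ≤ f t ∧ f t ≤ C * t ^ (-ε))
    (hle : cm ≤ cp)
    (hone : (0 < cm ∧ cm ≠ ⊤) ∨ (0 < cp ∧ cp ≠ ⊤))
    (hmul : ∀ t ≥ (1 : ℝ), ∀ t' ≥ (1 : ℝ),
      cm * ENNReal.ofReal (f t * f t') ≤ ENNReal.ofReal (f (t * t')) ∧
      ENNReal.ofReal (f (t * t')) ≤ cp * ENNReal.ofReal (f t * f t')) :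
    ∃ ξ : ℝ, 0 < ξ ∧ ∀ t ≥ (1 : ℝ),
      cp⁻¹ * ENNReal.ofReal (t ^ (-ξ)) ≤ ENNReal.ofReal (f t) ∧
      ENNReal.ofReal (f t) ≤ cm⁻¹ * ENNReal.ofReal (t ^ (-ξ)) := by
  obtain ⟨ε, A, c, C, hε, hA, hc, hC, hpoly'⟩ := hpoly
  have hlow : ∀ t ≥ (1:ℝ), c * t ^ (-A) ≤ f t := fun t ht => (hpoly' t ht).1
  have hupp : ∀ t ≥ (1:ℝ), f t ≤ C * t ^ (-ε) := fun t ht => (hpoly' t ht).2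
  by_cases hcp : cp = ⊤
  · -- cp = ∞: lower bound is vacuous; use superadditivity only.
    have hcm : 0 < cm ∧ cm ≠ ⊤ := by
      rcases hone with h | h
      · exact h
      · exact absurd hcp h.2
    have hM : 0 < cm.toReal := ENNReal.toReal_pos hcm.1.ne' hcm.2
    have hcmM : cm = ENNReal.ofReal cm.toReal := (ENNReal.ofReal_toReal hcm.2).symm
    have hsuper' : ∀ t ≥ (1:ℝ), ∀ t' ≥ (1:ℝ), cm.toReal * (f t * f t') ≤ f (t * t') := by
      intro t ht t' ht'
      have h := (hmul t ht t' ht').1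
      rw [hcmM, ← ENNReal.ofReal_mul hM.le] at h
      have hftt := hpos (t*t') (by nlinarith)
      exact (ENNReal.ofReal_le_ofReal_iff hftt.le).mp h
    have hdec := decay_upper f (-ε) C cm.toReal hpos hC hM hupp hsuper'
    refine ⟨ε, hε, fun t ht => ⟨?_, ?_⟩⟩
    · rw [hcp]
      simp
    · rw [hcmM]
      exact le_ofReal_inv_mul hM (hdec t ht)
  · have hcp' : 0 < cp := by
      rcases hone with h | h
      · exact lt_of_lt_of_le h.1 hle
      · exact h.1
    have hP : 0 < cp.toReal := ENNReal.toReal_pos hcp'.ne' hcp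
    have hcpP : cp = ENNReal.ofReal cp.toReal := (ENNReal.ofReal_toReal hcp).symm
    have hsub' : ∀ t ≥ (1:ℝ), ∀ t' ≥ (1:ℝ), f (t * t') ≤ cp.toReal * (f t * f t') := by
      intro t ht t' ht'
      have h := (hmul t ht t' ht').2
      rw [hcpP, ← ENNReal.ofReal_mul hP.le] at h
      have hft := hpos t ht
      have hft' := hpos t' ht'
      exact (ENNReal.ofReal_le_ofReal_iff (by positivity)).mp h
    by_cases hcm0 : cm = 0
    · -- cm = 0: upper bound is vacuous; use subadditivity only.
      have hdec := decay_lower f (-A) c cp.toReal hpos hc hP hlow hsub'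
      refine ⟨A, hA, fun t ht => ⟨?_, ?_⟩⟩
      · rw [hcpP]
        exact ofReal_inv_mul_le hP (hdec t ht)
      · rw [hcm0]
        have ht0 : (0:ℝ) < t := lt_of_lt_of_le one_pos ht
        have : ENNReal.ofReal (t ^ (-A)) ≠ 0 := by
          simp [ENNReal.ofReal_eq_zero, not_le, Real.rpow_pos_of_pos ht0]
        simp [ENNReal.top_mul this]
    · -- both constants finite and positive: the full Fekete argument.
      have hcm : 0 < cm := pos_iff_ne_zero.mpr hcm0
      have hcmtop : cm ≠ ⊤ := ne_top_of_le_ne_top hcp hle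
      have hM : 0 < cm.toReal := ENNReal.toReal_pos hcm0 hcmtop
      have hcmM : cm = ENNReal.ofReal cm.toReal := (ENNReal.ofReal_toReal hcmtop).symm
      have hMP : cm.toReal ≤ cp.toReal :=
        ENNReal.toReal_le_toReal hcmtop hcp |>.mpr hle
      have hsuper' : ∀ t ≥ (1:ℝ), ∀ t' ≥ (1:ℝ), cm.toReal * (f t * f t') ≤ f (t * t') := by
        intro t ht t' ht'
        have h := (hmul t ht t' ht').1
        rw [hcmM, ← ENNReal.ofReal_mul hM.le] at h
        have hftt := hpos (t*t') (by nlinarith)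
        exact (ENNReal.ofReal_le_ofReal_iff hftt.le).mp h
      obtain ⟨ξ, hξ, hbounds⟩ := core_lemma f ε A c C cm.toReal cp.toReal hpos hbdd
        hε hA hc hC hlow hupp hM hMP hsuper' hsub'
      refine ⟨ξ, hξ, fun t ht => ⟨?_, ?_⟩⟩
      · rw [hcpP]
        exact ofReal_inv_mul_le hP (hbounds t ht).1
      · rw [hcmM]
        exact le_ofReal_inv_mul hM (hbounds t ht).2
end

section
/- Let Z be a random variable with values in [0,2], and let Z₋, Z₊ be independent random variables each with the same law as Z, such that almost surely Z ≥ max(Z₋, Z₊). Then Z is almost surely constant. -/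
/-!
`Z₋ ≤ Z` almost surely and `Z₋` has the law of `Z`, so comparing the expectations of the bounded
strictly increasing function `arctan` of both sides gives `Z₋ = Z` almost surely; likewise
`Z₊ = Z`. Hence `Z` is independent of itself, so its law only takes the values `0` and `1`, and a
zero-one probability measure on `ℝ` is a Dirac mass.
-/

open MeasureTheory ProbabilityTheory Real

theorem MeasureTheory.ae_eq_of_ae_le_of_map_eq {Ω : Type*} [MeasurableSpace Ω] {μ : Measure Ω}
    [IsFiniteMeasure μ] {X Y : Ω → ℝ} (hX : AEMeasurable X μ) (hY : AEMeasurable Y μ)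
    (hle : X ≤ᵐ[μ] Y) (hmap : μ.map X = μ.map Y) : X =ᵐ[μ] Y := by
  have harctan_int (ν : Measure ℝ) [IsFiniteMeasure ν] : Integrable arctan ν :=
    .of_bound measurable_arctan.aestronglyMeasurable (π / 2) <| .of_forall fun x ↦ by
      rw [Real.norm_eq_abs, abs_le]
      exact ⟨(neg_pi_div_two_lt_arctan x).le, (arctan_lt_pi_div_two x).le⟩
  have hint {W : Ω → ℝ} (hW : AEMeasurable W μ) : Integrable (fun ω ↦ arctan (W ω)) μ :=
    (integrable_map_measure measurable_arctan.aestronglyMeasurable hW).1 (harctan_int _)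
  have heq : ∫ ω, arctan (X ω) ∂μ = ∫ ω, arctan (Y ω) ∂μ := by
    rw [← integral_map hX measurable_arctan.aestronglyMeasurable,
      ← integral_map hY measurable_arctan.aestronglyMeasurable, hmap]
  have harctan_eq := (integral_eq_iff_of_ae_le (hint hX) (hint hY)
    (hle.mono fun _ h ↦ arctan_mono h)).1 heq
  exact harctan_eq.mono fun _ h ↦ arctan_injective h

theorem ProbabilityTheory.IndepFun.exists_ae_eq_const_of_self {Ω E : Type*} [MeasurableSpace Ω]
    [MeasurableSpace E] [StandardBorelSpace E] {μ : Measure Ω} [IsProbabilityMeasure μ]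
    {X : Ω → E} (hX : Measurable X) (hindep : IndepFun X X μ) : ∃ c, ∀ᵐ ω ∂μ, X ω = c := by
  have : IsZeroOneMeasure (μ.map X) := ⟨fun s hs ↦ by
    rw [Measure.map_apply hX hs]
    exact measure_eq_zero_or_one_of_indepSet_self
      ((indepFun_iff_indepSet_preimage hX hX).1 hindep s s hs hs)⟩
  have := Measure.isProbabilityMeasure_map (μ := μ) hX.aemeasurable
  obtain ⟨c, hc⟩ := IsZeroOneMeasure.exists_eq_dirac (μ := μ.map X)
  refine ⟨c, (ae_map_iff (p := (· = c)) hX.aemeasurable (measurableSet_singleton c)).1 ?_⟩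
  rw [hc]
  exact (ae_dirac_iff (measurableSet_singleton c)).2 rfl

theorem zero_one_dimension_step_general {Ω : Type} [MeasureSpace Ω]
    [IsProbabilityMeasure (ℙ : Measure Ω)]
    (Z Zm Zp : Ω → ℝ) (hZ : Measurable Z) (hZm : Measurable Zm) (hZp : Measurable Zp)
    (hlawm : Measure.map Zm ℙ = Measure.map Z ℙ)
    (hlawp : Measure.map Zp ℙ = Measure.map Z ℙ)
    (hindep : IndepFun Zm Zp ℙ)
    (hmaj : ∀ᵐ ω ∂(ℙ : Measure Ω), max (Zm ω) (Zp ω) ≤ Z ω) :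
    ∃ c : ℝ, ∀ᵐ ω ∂(ℙ : Measure Ω), Z ω = c := by
  have hm : Zm =ᵐ[ℙ] Z := ae_eq_of_ae_le_of_map_eq hZm.aemeasurable hZ.aemeasurable
    (hmaj.mono fun _ h ↦ (le_max_left _ _).trans h) hlawm
  have hp : Zp =ᵐ[ℙ] Z := ae_eq_of_ae_le_of_map_eq hZp.aemeasurable hZ.aemeasurable
    (hmaj.mono fun _ h ↦ (le_max_right _ _).trans h) hlawp
  exact (hindep.congr hm hp).exists_ae_eq_const_of_self hZ

/-- zero-one law step: if `Z₋, Z₊` are independent, have the same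
law as `Z ∈ [0,2]`, and a.s. `Z ≥ max(Z₋, Z₊)`, then `Z` is a.s. constant. -/
theorem zero_one_dimension_step {Ω : Type} [MeasureSpace Ω]
    [IsProbabilityMeasure (ℙ : Measure Ω)]
    (Z Zm Zp : Ω → ℝ) (hZ : Measurable Z) (hZm : Measurable Zm) (hZp : Measurable Zp)
    (hrange : ∀ᵐ ω ∂(ℙ : Measure Ω), Z ω ∈ Set.Icc (0:ℝ) 2)
    (hlawm : Measure.map Zm ℙ = Measure.map Z ℙ)
    (hlawp : Measure.map Zp ℙ = Measure.map Z ℙ)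
    (hindep : IndepFun Zm Zp ℙ)
    (hmaj : ∀ᵐ ω ∂(ℙ : Measure Ω), max (Zm ω) (Zp ω) ≤ Z ω) :
    ∃ c : ℝ, ∀ᵐ ω ∂(ℙ : Measure Ω), Z ω = c :=
  zero_one_dimension_step_general Z Zm Zp hZ hZm hZp hlawm hlawp hindep hmaj
end
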